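/- arXiv:1306.0108 — 6 statements merged into one kernel-verified Lean document; each statement's English description precedes it below -/
import Mathlib

section
/- For a ring R the following are equivalent: (1) R is strongly P-clean; (2) the quotient ring R/P(R) is Boolean; (3) for every x ∈ R there exists an idempotent e ∈ R such that x − e ∈ P(R); (4) for every x ∈ R there exists an idempotent e ∈ comm²(x) such that x − e ∈ P(R). -/
/-- An element `a` of a ring is strongly nilpotent if every sequence
`a = a₀, a₁, a₂, …` with `a_{i+1} ∈ a_i R a_i` is eventually zero. -/
def IsStronglyNilpotent {R : Type*} [Ring R] (a : R) : Prop :=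
  ∀ f : ℕ → R, f 0 = a → (∀ i, ∃ r : R, f (i + 1) = f i * r * f i) → ∃ n, f n = 0

/-- The prime radical `P(R)`: the set of strongly nilpotent elements
(equivalently, the intersection of all prime ideals). -/
def primeRadical (R : Type*) [Ring R] : Set R :=
  {a | IsStronglyNilpotent a}

/-- An element is strongly P-clean if it is the sum of an idempotent and an
element of the prime radical that commute. -/
def IsStronglyPClean {R : Type*} [Ring R] (x : R) : Prop :=
  ∃ e w : R, IsIdempotentElem e ∧ w ∈ primeRadical R ∧ x = e + w ∧ e * w = w * e

/-- A ring is strongly P-clean if each of its elements is strongly P-clean. -/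
def StronglyPCleanRing (R : Type*) [Ring R] : Prop :=
  ∀ x : R, IsStronglyPClean x

/-- `comm²(x)`: the set of elements commuting with everything that commutes
with `x`. -/
def comm2 {R : Type*} [Ring R] (x : R) : Set R :=
  {r | ∀ y : R, x * y = y * x → r * y = y * r}

/-!
A strongly nilpotent element lies in every prime two-sided ideal, since outside a prime `P` one
can always continue a sequence `aᵢ₊₁ ∈ aᵢ R aᵢ` without entering `P`. Conversely, a sequence of
this kind that never vanishes is an m-system, and a two-sided ideal maximal among those missing
it is prime. So `P(R)` is the intersection of the prime ideals: a two-sided ideal, all of whose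
elements are nilpotent.

Modulo `P(R)`, a decomposition `x = e + w` makes `x` idempotent. Conversely, if `x - x²` lies in
`P(R)`, it is nilpotent, so `1 - (1 - xⁿ)ⁿ` is an idempotent for large `n`; being a polynomial in
`x` it lies in `comm²(x)`, and modulo `P(R)` it equals `x`.
-/

section

variable {R : Type*} [Ring R]

def IsMSystem (S : Set R) : Prop :=
  ∀ s ∈ S, ∀ t ∈ S, ∃ r, s * r * t ∈ S

namespace TwoSidedIdeal

structure IsPrime (P : TwoSidedIdeal R) : Prop where
  ne_top : P ≠ ⊤
  mem_or_mem {a b : R} : (∀ r, a * r * b ∈ P) → a ∈ P ∨ b ∈ P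

lemma mem_iff_ringCon_mk'_eq_zero (I : TwoSidedIdeal R) {a : R} :
    a ∈ I ↔ I.ringCon.mk' a = 0 := by
  rw [← mem_ker, ker_ringCon_mk']

def colon (P : TwoSidedIdeal R) (u v : R) : TwoSidedIdeal R :=
  mk' {z | ∀ r r', u * r * z * r' * v ∈ P}
    (fun _ _ => by simp)
    (fun hz hw r r' => by simpa [mul_add, add_mul] using P.add_mem (hz r r') (hw r r'))
    (fun hz r r' => by simpa using P.neg_mem (hz r r'))
    (fun {c _} hz r r' => by simpa [mul_assoc] using hz (r * c) r')
    (fun {_ c} hz r r' => by simpa [mul_assoc] using hz r (c * r'))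

lemma mem_colon {P : TwoSidedIdeal R} {u v z : R} :
    z ∈ P.colon u v ↔ ∀ r r', u * r * z * r' * v ∈ P :=
  mem_mk' ..

lemma le_colon (P : TwoSidedIdeal R) (u v : R) : P ≤ P.colon u v := fun _ hz =>
  mem_colon.2 fun _ _ => P.mul_mem_right _ _ (P.mul_mem_right _ _ (P.mul_mem_left _ _ hz))

lemma exists_coe_eq_sUnion_of_isChain {c : Set (TwoSidedIdeal R)} (hc : IsChain (· ≤ ·) c)
    (hne : c.Nonempty) : ∃ J : TwoSidedIdeal R, (J : Set R) = ⋃ I ∈ c, (I : Set R) := by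
  refine ⟨mk' (⋃ I ∈ c, (I : Set R)) ?_ ?_ ?_ ?_ ?_, coe_mk' ..⟩ <;>
    simp only [Set.mem_iUnion₂, SetLike.mem_coe]
  · obtain ⟨I, hI⟩ := hne
    exact ⟨I, hI, I.zero_mem⟩
  · rintro x y ⟨I, hI, hx⟩ ⟨J, hJ, hy⟩
    rcases hc.total hI hJ with h | h
    · exact ⟨J, hJ, J.add_mem (h hx) hy⟩
    · exact ⟨I, hI, I.add_mem hx (h hy)⟩
  · rintro x ⟨I, hI, hx⟩
    exact ⟨I, hI, I.neg_mem hx⟩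
  · rintro c x ⟨I, hI, hx⟩
    exact ⟨I, hI, I.mul_mem_left _ _ hx⟩
  · rintro x c ⟨I, hI, hx⟩
    exact ⟨I, hI, I.mul_mem_right _ _ hx⟩

lemma exists_maximal_disjoint {S : Set R} (hS : (0 : R) ∉ S) :
    ∃ P : TwoSidedIdeal R, Maximal (fun I : TwoSidedIdeal R => Disjoint (I : Set R) S) P := by
  have hbot : Disjoint ((⊥ : TwoSidedIdeal R) : Set R) S := by
    simpa [coe_bot] using hS
  obtain ⟨P, -, hP⟩ := zorn_le_nonempty₀ {I : TwoSidedIdeal R | Disjoint (I : Set R) S}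
    (fun c hcS hc I hI => by
      obtain ⟨J, hJ⟩ := exists_coe_eq_sUnion_of_isChain hc ⟨I, hI⟩
      refine ⟨J, ?_, fun K hK => ?_⟩
      · rw [Set.mem_ofPred_eq, hJ, Set.disjoint_iUnion₂_left]
        exact hcS
      · intro z hz
        rw [← SetLike.mem_coe, hJ]
        exact Set.mem_biUnion hK hz)
    ⊥ hbot
  exact ⟨P, hP⟩

lemma isPrime_of_maximal_disjoint {S : Set R} (hS : IsMSystem S) (hne : S.Nonempty)
    {P : TwoSidedIdeal R} (hP : Maximal (fun I : TwoSidedIdeal R => Disjoint (I : Set R) S) P) :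
    P.IsPrime := by
  have meets : ∀ {J : TwoSidedIdeal R} {z : R}, P ≤ J → z ∈ J → z ∉ P → ∃ s ∈ S, s ∈ J := by
    intro J z hPJ hz hzP
    by_contra! h
    exact hzP (hP.2 (Set.disjoint_right.2 h) hPJ hz)
  refine ⟨fun h => ?_, fun {a b} hab => ?_⟩
  · obtain ⟨s, hs⟩ := hne
    exact Set.disjoint_left.1 hP.1 (show s ∈ P by rw [h]; trivial) hs
  -- `a ∈ P.colon 1 b` gives `s ∈ S` with `s R b ⊆ P`, then `b ∈ P.colon s 1` gives `t ∈ S`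
  -- with `s R t ⊆ P`, against the m-system property
  by_contra! hnot
  obtain ⟨s, hsS, hs⟩ := meets (P.le_colon 1 b) (z := a)
    (mem_colon.2 fun r r' => by simpa [mul_assoc] using P.mul_mem_left r _ (hab r')) hnot.1
  obtain ⟨t, htS, ht⟩ := meets (P.le_colon s 1) (z := b)
    (mem_colon.2 fun r r' => by
      simpa using P.mul_mem_right _ r' (by simpa using mem_colon.1 hs 1 r)) hnot.2
  obtain ⟨r, hr⟩ := hS s hsS t htS
  exact Set.disjoint_left.1 hP.1 (by simpa using mem_colon.1 ht r 1) hr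

end TwoSidedIdeal

namespace IsStronglyNilpotent

lemma mem_of_isPrime {P : TwoSidedIdeal R} (hP : P.IsPrime) {a : R}
    (ha : IsStronglyNilpotent a) : a ∈ P := by
  by_contra haP
  have hstep : ∀ x : R, ∃ r, x ∉ P → x * r * x ∉ P := fun x => by
    by_cases hx : x ∈ P
    · exact ⟨0, fun h => (h hx).elim⟩
    · obtain ⟨r, hr⟩ : ∃ r, x * r * x ∉ P := by
        by_contra! h
        exact hx ((hP.mem_or_mem h).elim id id)
      exact ⟨r, fun _ => hr⟩
  choose r hr using hstep
  let f : ℕ → R := fun n => Nat.rec a (fun _ x => x * r x * x) n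
  have hf : ∀ n, f n ∉ P := fun n => by
    induction n with
    | zero => exact haP
    | succ n ih => exact hr _ ih
  obtain ⟨n, hn⟩ := ha f rfl fun i => ⟨r (f i), rfl⟩
  exact hf n (hn ▸ P.zero_mem)

lemma isNilpotent {a : R} (ha : IsStronglyNilpotent a) : IsNilpotent a := by
  obtain ⟨n, hn⟩ := ha (fun i => a ^ 2 ^ i) (by simp) fun i =>
    ⟨1, by rw [mul_one, ← pow_add, ← two_mul, ← pow_succ']⟩
  exact ⟨_, hn⟩

end IsStronglyNilpotent

lemma isMSystem_range_of_forall_exists_eq_mul_mul {f : ℕ → R}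
    (hf : ∀ i, ∃ r, f (i + 1) = f i * r * f i) : IsMSystem (Set.range f) := by
  have hdvd : ∀ m k, m ≤ k → (∃ x, f k = f m * x) ∧ ∃ y, f k = y * f m := by
    intro m k hmk
    induction k, hmk using Nat.le_induction with
    | base => exact ⟨⟨1, (mul_one _).symm⟩, ⟨1, (one_mul _).symm⟩⟩
    | succ k _ ih =>
      obtain ⟨r, hr⟩ := hf k
      obtain ⟨⟨x, hx⟩, ⟨y, hy⟩⟩ := ih
      exact ⟨⟨x * r * f k, by rw [hr, hx]; simp only [mul_assoc]⟩,
        ⟨f k * r * y, by rw [hr, hy]; simp only [mul_assoc]⟩⟩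
  rintro _ ⟨m, rfl⟩ _ ⟨n, rfl⟩
  obtain ⟨⟨x, hx⟩, -⟩ := hdvd m (max m n) (le_max_left m n)
  obtain ⟨-, ⟨y, hy⟩⟩ := hdvd n (max m n) (le_max_right m n)
  obtain ⟨r, hr⟩ := hf (max m n)
  refine ⟨x * r * y, max m n + 1, ?_⟩
  calc f (max m n + 1) = f m * x * r * (y * f n) := by rw [hr, ← hx, ← hy]
    _ = f m * (x * r * y) * f n := by simp only [mul_assoc]

lemma exists_isPrime_notMem_of_not_isStronglyNilpotent {a : R} (ha : ¬IsStronglyNilpotent a) :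
    ∃ P : TwoSidedIdeal R, P.IsPrime ∧ a ∉ P := by
  simp only [IsStronglyNilpotent, not_forall, not_exists] at ha
  obtain ⟨f, rfl, hf, hne⟩ := ha
  obtain ⟨P, hP⟩ := TwoSidedIdeal.exists_maximal_disjoint (S := Set.range f)
    fun ⟨n, hn⟩ => hne n hn
  exact ⟨P, TwoSidedIdeal.isPrime_of_maximal_disjoint
    (isMSystem_range_of_forall_exists_eq_mul_mul hf) (Set.range_nonempty f) hP,
    fun h => Set.disjoint_left.1 hP.1 h ⟨0, rfl⟩⟩

theorem mem_primeRadical_iff_forall_isPrime {a : R} :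
    a ∈ primeRadical R ↔ ∀ P : TwoSidedIdeal R, P.IsPrime → a ∈ P := by
  refine ⟨fun ha _ hP => IsStronglyNilpotent.mem_of_isPrime hP ha, fun h => ?_⟩
  by_contra ha
  obtain ⟨P, hP, haP⟩ := exists_isPrime_notMem_of_not_isStronglyNilpotent ha
  exact haP (h P hP)

variable (R) in
def primeRadicalIdeal : TwoSidedIdeal R :=
  sInf {P | P.IsPrime}

lemma mem_primeRadicalIdeal {a : R} : a ∈ primeRadicalIdeal R ↔ a ∈ primeRadical R := by
  rw [mem_primeRadical_iff_forall_isPrime, primeRadicalIdeal, TwoSidedIdeal.mem_sInf]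
  rfl

namespace TwoSidedIdeal

variable (I : TwoSidedIdeal R)

lemma sub_mul_self_mem_of_sub_mem {x e : R} (he : IsIdempotentElem e) (h : x - e ∈ I) :
    x - x * x ∈ I := by
  have key : x - x * x = (x - e) - (x - e) * x - e * (x - e) + (e - e * e) := by noncomm_ring
  rw [key, he.eq, sub_self, add_zero]
  exact I.sub_mem (I.sub_mem h (I.mul_mem_right _ _ h)) (I.mul_mem_left _ _ h)

lemma exists_isIdempotentElem_mem_comm2_sub_mem {x : R} (hnil : IsNilpotent (x - x * x))
    (hI : x - x * x ∈ I) : ∃ e, IsIdempotentElem e ∧ e ∈ comm2 x ∧ x - e ∈ I := by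
  obtain ⟨n, hn⟩ := hnil
  have hn' : (x - x ^ 2) ^ (n + 1) = 0 := by rw [pow_succ, sq, hn, zero_mul]
  refine ⟨1 - (1 - x ^ (n + 1)) ^ (n + 1), isIdempotentElem_one_sub_one_sub_pow_pow x _ hn',
    fun y hy => ?_, ?_⟩
  · have hxy : Commute x y := hy
    exact ((Commute.one_left y).sub_left
      (((Commute.one_left y).sub_left (hxy.pow_left _)).pow_left _)).eq
  · -- modulo `I` the element `x` is idempotent, so `e ≡ 1 - (1 - x) = x`
    set π := I.ringCon.mk'
    have hπx : IsIdempotentElem (π x) := by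
      rw [IsIdempotentElem, ← map_mul, eq_comm, ← sub_eq_zero, ← map_sub,
        ← mem_iff_ringCon_mk'_eq_zero]
      exact hI
    rw [mem_iff_ringCon_mk'_eq_zero, map_sub, map_sub, map_one, map_pow, map_sub, map_one,
      map_pow, hπx.pow_succ_eq, hπx.one_sub.pow_succ_eq, sub_sub_cancel, sub_self]

end TwoSidedIdeal

end

/-- **Theorem 2.4.** For a ring `R` the following are equivalent:
(1) `R` is strongly P-clean;
(2) `R/P(R)` is Boolean, i.e. `x - x² ∈ P(R)` for all `x`;
(3) for every `x` there is an idempotent `e` with `x - e ∈ P(R)`;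
(4) for every `x` there is an idempotent `e ∈ comm²(x)` with `x - e ∈ P(R)`. -/
theorem stronglyPCleanRing_tfae (R : Type*) [Ring R] :
    [StronglyPCleanRing R,
     ∀ x : R, x - x * x ∈ primeRadical R,
     ∀ x : R, ∃ e : R, IsIdempotentElem e ∧ x - e ∈ primeRadical R,
     ∀ x : R, ∃ e : R, IsIdempotentElem e ∧ e ∈ comm2 x ∧ x - e ∈ primeRadical R].TFAE := by
  tfae_have 1 → 3 := fun h x => by
    obtain ⟨e, w, he, hw, rfl, -⟩ := h x
    exact ⟨e, he, by rwa [add_sub_cancel_left]⟩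
  tfae_have 3 → 2 := fun h x => by
    obtain ⟨e, he, hxe⟩ := h x
    exact mem_primeRadicalIdeal.1 <|
      (primeRadicalIdeal R).sub_mul_self_mem_of_sub_mem he (mem_primeRadicalIdeal.2 hxe)
  tfae_have 2 → 4 := fun h x => by
    obtain ⟨e, he, hcomm, hxe⟩ := (primeRadicalIdeal R).exists_isIdempotentElem_mem_comm2_sub_mem
      (IsStronglyNilpotent.isNilpotent (h x)) (mem_primeRadicalIdeal.2 (h x))
    exact ⟨e, he, hcomm, mem_primeRadicalIdeal.1 hxe⟩
  tfae_have 4 → 1 := fun h x => by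
    obtain ⟨e, he, hcomm, hxe⟩ := h x
    refine ⟨e, x - e, he, hxe, (add_sub_cancel e x).symm, ?_⟩
    rw [mul_sub, sub_mul, hcomm x rfl]
  tfae_finish
end

section
/- A ring R is strongly P-clean if and only if (1) R is periodic, and (2) every element of 1 + U(R) is strongly nilpotent (i.e., lies in P(R)). -/
/-- A ring is periodic if for every element `x` there are positive integers
`m < n` with `x^m = x^n`. -/
def IsPeriodicRing (R : Type*) [Ring R] : Prop :=
  ∀ x : R, ∃ m n : ℕ, 0 < m ∧ m < n ∧ x ^ m = x ^ n

open Polynomial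

section

variable {R : Type*} [Ring R]

theorem IsStronglyNilpotent.isNilpotent_s2 {a : R} (h : IsStronglyNilpotent a) : IsNilpotent a := by
  obtain ⟨n, hn⟩ := h (fun i => a ^ 2 ^ i) (by simp)
    fun i => ⟨1, by rw [mul_one, ← pow_add, pow_succ, mul_two]⟩
  exact ⟨2 ^ n, hn⟩

theorem exists_pow_eq_pow_of_aeval_eq_zero {A : Type*} [CommRing A] [Finite A] [Algebra A R]
    {q : A[X]} (hq : q.Monic) {x : R} (hx : aeval x q = 0) :
    ∃ m n : ℕ, 0 < m ∧ m < n ∧ x ^ m = x ^ n := by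
  have : Module.Finite A (AdjoinRoot q) := (AdjoinRoot.powerBasis' hq).finite
  have : Finite (AdjoinRoot q) := Module.finite_of_finite A
  have pow_eq_of_root_pow_eq (i j : ℕ)
      (h : AdjoinRoot.root q ^ (i + 1) = AdjoinRoot.root q ^ (j + 1)) :
      x ^ (i + 1) = x ^ (j + 1) := by
    obtain ⟨g, hg⟩ : q ∣ X ^ (i + 1) - X ^ (j + 1) := by
      rw [← AdjoinRoot.mk_eq_zero]
      simpa [sub_eq_zero] using h
    simpa [hx, sub_eq_zero] using congrArg (aeval x) hg
  obtain ⟨i, j, hij, hroot⟩ :=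
    Finite.exists_ne_map_eq_of_infinite fun t : ℕ => AdjoinRoot.root q ^ (t + 1)
  rcases hij.lt_or_gt with h | h
  · exact ⟨i + 1, j + 1, i.succ_pos, by omega, pow_eq_of_root_pow_eq i j hroot⟩
  · exact ⟨j + 1, i + 1, j.succ_pos, by omega, pow_eq_of_root_pow_eq j i hroot.symm⟩

theorem exists_pow_eq_pow_of_isNilpotent_sq_sub {x : R} (h2 : IsNilpotent (2 : R))
    (hx : IsNilpotent (x ^ 2 - x)) : ∃ m n : ℕ, 0 < m ∧ m < n ∧ x ^ m = x ^ n := by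
  obtain ⟨c, hc⟩ := h2
  obtain ⟨k, hk⟩ := hx
  have : NeZero (2 ^ c) := ⟨by positivity⟩
  -- `ZMod (2 ^ c)` acts on `R` since `2 ^ c = 0`, and `x` is a root of `(X ^ 2 - X) ^ k`.
  let := ZMod.algebra' R (ringChar R) (ringChar.dvd (x := 2 ^ c) (by exact_mod_cast hc))
  refine exists_pow_eq_pow_of_aeval_eq_zero (q := (X ^ 2 - X : (ZMod (2 ^ c))[X]) ^ k) ?_
    (by simpa using hk)
  exact (monic_X_pow_sub (degree_X_le.trans_lt (by norm_num))).pow k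

theorem exists_isIdempotentElem_pow {M : Type*} [Monoid M] {x : M} {m n : ℕ} (hm : 0 < m)
    (hmn : m < n) (h : x ^ m = x ^ n) : ∃ k, k ≠ 0 ∧ IsIdempotentElem (x ^ k) := by
  obtain ⟨d, rfl⟩ := Nat.exists_eq_add_of_lt hmn
  have hper (t : ℕ) : x ^ (m + t * (d + 1)) = x ^ m := by
    induction t with
    | zero => simp
    | succ t ih => rw [add_mul, one_mul, ← add_assoc, pow_add, ih, ← pow_add, ← add_assoc, h]
  refine ⟨m * (d + 1), by positivity, ?_⟩
  calc x ^ (m * (d + 1)) * x ^ (m * (d + 1)) = x ^ (m * d) * x ^ (m + m * (d + 1)) := by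
        rw [← pow_add, ← pow_add]; ring_nf
    _ = x ^ (m * (d + 1)) := by rw [hper, ← pow_add]; ring_nf

open scoped IsMulCommutative in
theorem isUnit_sub_pow_sub_one {x : R} {k : ℕ} (hk : k ≠ 0) (h2 : IsNilpotent (2 : R))
    (he : IsIdempotentElem (x ^ k)) : IsUnit (x - x ^ k - 1) := by
  let S := Subring.closure ({x} : Set R)
  have : IsMulCommutative S := Subring.isMulCommutative_closure (by simp)
  let y : S := ⟨x, Subring.subset_closure rfl⟩
  suffices IsUnit (y - y ^ k - 1) by simpa using this.map S.subtype
  have h2 : IsNilpotent (2 : S) := (IsNilpotent.map_iff S.subtype_injective).1 (by rwa [map_ofNat])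
  have he : IsIdempotentElem (y ^ k) := Subtype.ext (by simpa using he.eq)
  by_contra hu
  obtain ⟨M, hM, hzM⟩ := exists_max_ideal_of_mem_nonunits hu
  have h2M : (2 : S) ∈ M := by
    obtain ⟨n, hn⟩ := h2
    exact hM.isPrime.mem_of_pow_mem n (hn ▸ M.zero_mem)
  have hyM : y ∈ M := by
    have : y ^ k * (y ^ k - 1) ∈ M := by
      rw [mul_sub, mul_one, he.eq, sub_self]
      exact M.zero_mem
    rcases hM.isPrime.mem_or_mem this with h | h
    · exact hM.isPrime.mem_of_pow_mem k h
    · rw [show y = (y - y ^ k - 1) + (y ^ k - 1) + 2 by ring]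
      exact add_mem (add_mem hzM h) h2M
  refine hM.ne_top ((M.eq_top_iff_one).2 ?_)
  rw [show (1 : S) = y - y ^ k - (y - y ^ k - 1) by ring]
  exact sub_mem (sub_mem hyM (M.pow_mem_of_mem hyM k (Nat.pos_of_ne_zero hk))) hzM

theorem IsStronglyPClean.isNilpotent_sq_sub {x : R} (h : IsStronglyPClean x) :
    IsNilpotent (x ^ 2 - x) := by
  obtain ⟨e, w, he, hw, rfl, hew⟩ := h
  have hcomm : Commute w (2 * e + w - 1) :=
    (((Commute.ofNat_right w 2).mul_right (Commute.symm hew)).add_right (.refl w)).sub_right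
      (.one_right w)
  have hsplit : (e + w) ^ 2 - (e + w) = w * (2 * e + w - 1) :=
    calc (e + w) ^ 2 - (e + w) = (e * e - e) + w * (2 * e + w - 1) + (e * w - w * e) := by
          noncomm_ring
      _ = w * (2 * e + w - 1) := by rw [he.eq, hew, sub_self, sub_self, zero_add, add_zero]
  rw [hsplit]
  exact hcomm.isNilpotent_mul_right (IsStronglyNilpotent.isNilpotent_s2 hw)

theorem IsStronglyPClean.isNilpotent_sub_one_of_isUnit {u : R} (h : IsStronglyPClean u)
    (hu : IsUnit u) : IsNilpotent (u - 1) := by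
  obtain ⟨e, w, he, hw, rfl, hew⟩ := h
  have hw := IsStronglyNilpotent.isNilpotent_s2 hw
  have he_unit : IsUnit e := by
    simpa using hw.neg.isUnit_add_left_of_commute hu
      ((Commute.symm hew).add_right (.refl w)).neg_left
  rwa [(IsIdempotentElem.iff_eq_one_of_isUnit he_unit).1 he, add_sub_cancel_left]

theorem IsStronglyPClean.mem_primeRadical_of_isNilpotent {x : R} (h : IsStronglyPClean x)
    (hx : IsNilpotent x) : x ∈ primeRadical R := by
  obtain ⟨e, w, he, hw, rfl, hew⟩ := h
  have he_nil : IsNilpotent e := by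
    simpa using ((show Commute e w from hew).add_left (.refl w)).isNilpotent_sub hx
      (IsStronglyNilpotent.isNilpotent_s2 hw)
  rwa [he.eq_zero_of_isNilpotent he_nil, zero_add]

namespace StronglyPCleanRing

theorem isNilpotent_two (h : StronglyPCleanRing R) : IsNilpotent (2 : R) := by
  simpa [show (2 : R) ^ 2 - 2 = 2 by norm_num] using (h 2).isNilpotent_sq_sub

theorem isPeriodicRing (h : StronglyPCleanRing R) : IsPeriodicRing R := fun x =>
  exists_pow_eq_pow_of_isNilpotent_sq_sub h.isNilpotent_two (h x).isNilpotent_sq_sub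

theorem one_add_mem_primeRadical (h : StronglyPCleanRing R) {u : R} (hu : IsUnit u) :
    1 + u ∈ primeRadical R := by
  refine (h _).mem_primeRadical_of_isNilpotent ?_
  rw [show 1 + u = 2 + (u - 1) by rw [← one_add_one_eq_two]; abel]
  exact (Commute.ofNat_left 2 _).isNilpotent_add h.isNilpotent_two
    ((h u).isNilpotent_sub_one_of_isUnit hu)

end StronglyPCleanRing

end

/-- **Corollary 2.5.** A ring `R` is strongly P-clean iff `R` is periodic and
every element of `1 + U(R)` is strongly nilpotent (i.e. lies in `P(R)`). -/
theorem stronglyPCleanRing_iff_periodic_and_one_add_unit_stronglyNilpotent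
    (R : Type*) [Ring R] :
    StronglyPCleanRing R ↔
      IsPeriodicRing R ∧ ∀ u : Rˣ, (1 + (u : R)) ∈ primeRadical R := by
  refine ⟨fun h => ⟨h.isPeriodicRing, fun u => h.one_add_mem_primeRadical u.isUnit⟩, ?_⟩
  rintro ⟨hper, hP⟩ x
  have h2 : IsNilpotent (2 : R) := by
    simpa [one_add_one_eq_two] using IsStronglyNilpotent.isNilpotent_s2 (hP 1)
  obtain ⟨m, n, hm, hmn, hx⟩ := hper x
  obtain ⟨k, hk, he⟩ := exists_isIdempotentElem_pow hm hmn hx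
  obtain ⟨u, hu⟩ := isUnit_sub_pow_sub_one hk h2 he
  refine ⟨x ^ k, x - x ^ k, he, ?_, by abel,
    ((Commute.self_pow x k).symm.sub_right (.refl _)).eq⟩
  simpa [hu] using hP u
end

section
/- Let R be a ring and let a = e + w be a strongly P-clean decomposition of a ∈ R (so e is an idempotent, w ∈ P(R), and ew = we). Then the left annihilator of a is contained in the left annihilator of e, and the right annihilator of a is contained in the right annihilator of e; that is, for every r ∈ R, ra = 0 implies re = 0, and ar = 0 implies er = 0. -/
/-!
Since `w` is nilpotent, `1 + w` is a unit, and because `e` commutes with `w`,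
`(e + w) * e = e * (1 + w)` and `e * (e + w) = (1 + w) * e`. Hence `r * a = 0` gives
`r * e * (1 + w) = r * a * e = 0`, so `r * e = 0`; symmetrically on the right.
-/

/-- The sequence `w, w², w⁴, …` (with `a_{i+1} = a_i * 1 * a_i`) witnesses nilpotence. -/
theorem IsStronglyNilpotent.isNilpotent_s10 {R : Type*} [Ring R] {w : R}
    (hw : IsStronglyNilpotent w) : IsNilpotent w := by
  obtain ⟨n, hn⟩ := hw (fun i => w ^ 2 ^ i) (pow_one w)
    fun i => ⟨1, by rw [mul_one, ← pow_add, pow_succ, mul_two]⟩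
  exact ⟨2 ^ n, hn⟩

section IdempotentAddNilpotent

variable {R : Type*} [Ring R] {e w : R}

theorem IsIdempotentElem.add_mul_self_eq_mul_one_add (he : IsIdempotentElem e)
    (hcomm : Commute e w) : (e + w) * e = e * (1 + w) := by
  rw [add_mul, he.eq, hcomm.eq.symm, mul_one_add]

theorem IsIdempotentElem.mul_add_self_eq_one_add_mul (he : IsIdempotentElem e)
    (hcomm : Commute e w) : e * (e + w) = (1 + w) * e := by
  rw [mul_add, he.eq, hcomm.eq, one_add_mul]

theorem IsIdempotentElem.mul_eq_zero_of_mul_add_nilpotent_eq_zero (he : IsIdempotentElem e)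
    (hw : IsNilpotent w) (hcomm : Commute e w) {r : R} (hr : r * (e + w) = 0) :
    r * e = 0 :=
  (hw.isUnit_one_add.mul_left_eq_zero).mp <| by
    rw [mul_assoc, ← he.add_mul_self_eq_mul_one_add hcomm, ← mul_assoc, hr, zero_mul]

theorem IsIdempotentElem.mul_eq_zero_of_add_nilpotent_mul_eq_zero (he : IsIdempotentElem e)
    (hw : IsNilpotent w) (hcomm : Commute e w) {r : R} (hr : (e + w) * r = 0) :
    e * r = 0 :=
  (hw.isUnit_one_add.mul_right_eq_zero).mp <| by
    rw [← mul_assoc, ← he.mul_add_self_eq_one_add_mul hcomm, mul_assoc, hr, mul_zero]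

end IdempotentAddNilpotent

/-- **Lemma 3.1.** If `a = e + w` is a strongly P-clean decomposition of
`a ∈ R` (`e` idempotent, `w ∈ P(R)`, `ew = we`), then `annₗ(a) ⊆ annₗ(e)`
and `annᵣ(a) ⊆ annᵣ(e)`: for every `r ∈ R`, `ra = 0` implies `re = 0`, and
`ar = 0` implies `er = 0`. -/
theorem annihilators_of_stronglyPClean_decomposition
    {R : Type*} [Ring R] (a e w : R) (he : IsIdempotentElem e)
    (hw : w ∈ primeRadical R) (hsum : a = e + w) (hcomm : e * w = w * e) :
    (∀ r : R, r * a = 0 → r * e = 0) ∧ (∀ r : R, a * r = 0 → e * r = 0) := by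
  have hnil : IsNilpotent w := IsStronglyNilpotent.isNilpotent_s10 hw
  subst hsum
  exact ⟨fun _ hr => he.mul_eq_zero_of_mul_add_nilpotent_eq_zero hnil hcomm hr,
    fun _ hr => he.mul_eq_zero_of_add_nilpotent_mul_eq_zero hnil hcomm hr⟩
end

section
/- Let R be a ring and let f ∈ R be an idempotent. Then an element a ∈ fRf is strongly P-clean as an element of R if and only if a is strongly P-clean as an element of the corner ring fRf (a ring with identity f). -/
/-- The corner set `fRf = {x | fx = x and xf = x}` as a non-unital subring. -/
def cornerSubring {R : Type*} [Ring R] (f : R) : NonUnitalSubring R where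
  carrier := {x | f * x = x ∧ x * f = x}
  add_mem' := by
    rintro a b ⟨ha1, ha2⟩ ⟨hb1, hb2⟩
    exact ⟨by rw [mul_add, ha1, hb1], by rw [add_mul, ha2, hb2]⟩
  zero_mem' := by simp
  neg_mem' := by
    rintro a ⟨ha1, ha2⟩
    exact ⟨by rw [mul_neg, ha1], by rw [neg_mul, ha2]⟩
  mul_mem' := by
    rintro a b ⟨ha1, ha2⟩ ⟨hb1, hb2⟩
    exact ⟨by rw [← mul_assoc, ha1], by rw [mul_assoc, hb2]⟩

/-- The corner ring `fRf` of an idempotent `f`: a ring with identity `f`. -/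
def cornerRing {R : Type*} [Ring R] (f : R) (hf : IsIdempotentElem f) :
    Ring (cornerSubring f) :=
  { (inferInstance : NonUnitalRing (cornerSubring f)) with
    one := ⟨f, hf, hf⟩
    one_mul := fun x => Subtype.ext x.2.1
    mul_one := fun x => Subtype.ext x.2.2 }

/-!
`x` is strongly P-clean iff `x - x²` is strongly nilpotent. If `x = e + w`, then
`x - x² = w (1 - 2e - w)`, and right multiples of strongly nilpotent elements are strongly
nilpotent. Conversely, `x - x²` is then nilpotent, say `(x - x²)ⁿ = 0`, so `e = 1 - (1 - xⁿ)ⁿ` is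
an idempotent commuting with `x`, and `x - e` is a right multiple of `x - x²` because the
polynomial `X - (1 - (1 - Xⁿ)ⁿ)` vanishes at `0` and `1`.

For `a ∈ fRf`, strong nilpotency of `a` is the same in `R` and in `fRf`: along a sequence
`aᵢ₊₁ = aᵢ r aᵢ` inside `fRf` one may replace `r` by `f r f`. So the criterion does not see the
corner.
-/

open Polynomial

namespace IsStronglyNilpotent

variable {R : Type*} [Ring R] {w : R}

theorem mul_right (hw : IsStronglyNilpotent w) (c : R) : IsStronglyNilpotent (w * c) := by
  intro g hg0 hg
  choose r hr using hg
  -- `g = h * c` for the sequence `h (i + 1) = h i * (c * r i) * h i` starting at `w`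
  let h : ℕ → R := fun n => Nat.rec w (fun i hi => hi * (c * r i) * hi) n
  have hstep : ∀ i, h (i + 1) = h i * (c * r i) * h i := fun _ => rfl
  have hgh : ∀ i, g i = h i * c := by
    intro i
    induction i with
    | zero => exact hg0
    | succ i ih => rw [hr i, ih, hstep]; simp only [mul_assoc]
  obtain ⟨n, hn⟩ := hw h rfl fun i => ⟨c * r i, hstep i⟩
  exact ⟨n, by rw [hgh n, hn, zero_mul]⟩

theorem isNilpotent_s11 (hw : IsStronglyNilpotent w) : IsNilpotent w := by
  obtain ⟨n, hn⟩ := hw (fun i => w ^ 2 ^ i) (pow_one w) fun i =>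
    ⟨1, by rw [mul_one, ← pow_add, ← two_mul, pow_succ, mul_comm]⟩
  exact ⟨_, hn⟩

end IsStronglyNilpotent

theorem exists_sub_one_sub_one_sub_pow_pow_eq_sub_sq_mul {R : Type*} [Ring R] (x : R) {n : ℕ}
    (hn : n ≠ 0) : ∃ c, x - (1 - (1 - x ^ n) ^ n) = (x - x ^ 2) * c := by
  set p : ℤ[X] := X - (1 - (1 - X ^ n) ^ n)
  have hdvd : X - X ^ 2 ∣ p := by
    have h0 : X - C 0 ∣ p := dvd_iff_isRoot.mpr (by simp [p, hn])
    have h1 : X - C 1 ∣ p := dvd_iff_isRoot.mpr (by simp [p, hn])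
    have hcop : IsCoprime (X : ℤ[X]) (1 - X) := ⟨1, 1, by ring⟩
    have := hcop.mul_dvd (by simpa using h0) (by rw [← neg_sub, neg_dvd]; simpa using h1)
    rwa [mul_one_sub, ← sq] at this
  obtain ⟨q, hq⟩ := hdvd
  exact ⟨aeval x q, by simpa [p] using congrArg (aeval x) hq⟩

theorem isStronglyPClean_iff_isStronglyNilpotent_sub_sq {R : Type*} [Ring R] (x : R) :
    IsStronglyPClean x ↔ IsStronglyNilpotent (x - x ^ 2) := by
  constructor
  · rintro ⟨e, w, he, hw, rfl, hew⟩
    have : e + w - (e + w) ^ 2 = w * (1 - 2 * e - w) := by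
      simp only [sq, add_mul, mul_add, he.eq, hew, mul_sub, mul_one, two_mul]
      abel
    exact this ▸ hw.mul_right _
  · intro hT
    obtain ⟨n, hn⟩ := hT.isNilpotent_s11
    obtain ⟨c, hc⟩ := exists_sub_one_sub_one_sub_pow_pow_eq_sub_sq_mul x n.add_one_ne_zero
    have hx : Commute x (1 - (1 - x ^ (n + 1)) ^ (n + 1)) :=
      (Commute.one_right x).sub_right
        (((Commute.one_right x).sub_right (Commute.self_pow x _)).pow_right _)
    refine ⟨_, _, isIdempotentElem_one_sub_one_sub_pow_pow x _ (pow_eq_zero_of_le n.le_succ hn),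
      hc ▸ hT.mul_right c, (add_sub_cancel _ x).symm, ?_⟩
    exact (hx.symm.sub_right (Commute.refl _)).eq

theorem isStronglyNilpotent_coe_iff {R : Type*} [Ring R] {f : R} (hf : IsIdempotentElem f)
    (w : cornerSubring f) :
    letI : Ring (cornerSubring f) := cornerRing f hf
    IsStronglyNilpotent (w : R) ↔ IsStronglyNilpotent w := by
  let : Ring (cornerSubring f) := cornerRing f hf
  have hfrf : ∀ r, f * r * f ∈ cornerSubring f := fun r =>
    ⟨by rw [← mul_assoc, ← mul_assoc, hf.eq], by rw [mul_assoc, hf.eq]⟩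
  have hsandwich : ∀ x ∈ cornerSubring f, ∀ r, x * r * x = x * (f * r * f) * x := by
    rintro x ⟨hfx, hxf⟩ r
    simp only [← mul_assoc, hxf]
    rw [mul_assoc _ f x, hfx]
  constructor
  · intro hw g hg0 hg
    obtain ⟨n, hn⟩ := hw (fun i => g i) (congrArg Subtype.val hg0) fun i => by
      obtain ⟨r, hr⟩ := hg i
      exact ⟨r, congrArg Subtype.val hr⟩
    exact ⟨n, Subtype.ext hn⟩
  · intro hw g hg0 hg
    choose r hr using hg
    have hmem : ∀ i, g i ∈ cornerSubring f := by
      intro i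
      induction i with
      | zero => exact hg0 ▸ w.2
      | succ i ih =>
        rw [hr i, hsandwich _ ih]
        exact mul_mem (mul_mem ih (hfrf _)) ih
    obtain ⟨n, hn⟩ := hw (fun i => ⟨g i, hmem i⟩) (Subtype.ext hg0) fun i =>
      ⟨⟨f * r i * f, hfrf _⟩, Subtype.ext ((hr i).trans (hsandwich _ (hmem i) _))⟩
    exact ⟨n, congrArg Subtype.val hn⟩

/-- **Theorem 3.2.** Let `f ∈ R` be an idempotent. An element `a ∈ fRf` is
strongly P-clean in `R` iff it is strongly P-clean in the corner ring `fRf`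
(a ring with identity `f`). -/
theorem isStronglyPClean_corner_iff {R : Type*} [Ring R]
    (f : R) (hf : IsIdempotentElem f) (a : R) (ha : a ∈ cornerSubring f) :
    letI : Ring (cornerSubring f) := cornerRing f hf
    (IsStronglyPClean a ↔ IsStronglyPClean (⟨a, ha⟩ : cornerSubring f)) := by
  let : Ring (cornerSubring f) := cornerRing f hf
  rw [isStronglyPClean_iff_isStronglyNilpotent_sub_sq,
    isStronglyPClean_iff_isStronglyNilpotent_sub_sq, ← isStronglyNilpotent_coe_iff hf, sq, sq]
  rfl
end

section
/- Let R be a commutative local ring and A ∈ M₂(R). If A is strongly P-clean, then either A ∈ M₂(P(R)), or I₂ − A ∈ M₂(P(R)), or tr(A) ∈ 1 + P(R) and tr(A)² − 4·det(A) = u² for some u ∈ 1 + P(R). -/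
/-!
Write `A = E + W` with `E` idempotent, `W` strongly nilpotent and `EW = WE`. The entries of `W` are
nilpotent, because the sandwich `W ↦ W Eⱼᵢ W` with a matrix unit squares the `(i, j)` entry.
Over a local ring scalar idempotents are `0` or `1`; applied to `det E` and then, through
Cayley–Hamilton (`E = tr(E) E` when `det E = 0`), to `tr E`, this leaves `E = 0`, `E = 1` or
`tr E = 1`. In the last case `P X P = tr(P X) P` for `P = E` and `P = 1 - E`, so `EW = WE` gives
`A = (1 + a) E + b (1 - E)` with `a = tr(EW)` and `b = tr((1 - E)W)` nilpotent. Then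
`tr A = 1 + a + b`, `det A = (1 + a) b` and `tr(A)² - 4 det A = (1 + a - b)²`.
-/

theorem IsIdempotentElem.eq_zero_or_eq_one_of_isLocalRing {R : Type*} [CommRing R]
    [IsLocalRing R] {e : R} (he : IsIdempotentElem e) : e = 0 ∨ e = 1 := by
  rcases IsLocalRing.isUnit_or_isUnit_one_sub_self e with hu | hu
  · exact Or.inr ((IsIdempotentElem.iff_eq_one_of_isUnit hu).1 he)
  · exact Or.inl (sub_eq_self.1 ((IsIdempotentElem.iff_eq_one_of_isUnit hu).1 he.one_sub))

namespace Matrix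

variable {n R : Type*} [Fintype n] [CommRing R]

theorem mul_single_one_mul_apply [DecidableEq n] (M N : Matrix n n R) (i j : n) :
    (M * single j i (1 : R) * N) i j = M i j * N i j := by
  rw [Matrix.mul_assoc, mul_apply, Finset.sum_eq_single j (fun k _ hk => by simp [hk]) (by simp)]
  simp

theorem _root_.IsStronglyNilpotent.isNilpotent_matrix_apply [DecidableEq n] {W : Matrix n n R}
    (hW : IsStronglyNilpotent W) (i j : n) : IsNilpotent (W i j) := by
  let f : ℕ → Matrix n n R := fun k => Nat.rec W (fun _ M => M * single j i 1 * M) k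
  obtain ⟨k, hk⟩ := hW f rfl fun _ => ⟨single j i 1, rfl⟩
  have hf (k : ℕ) : f k i j = W i j ^ 2 ^ k := by
    induction k with
    | zero => simp [f]
    | succ k ih =>
      rw [show f (k + 1) = f k * single j i 1 * f k from rfl, mul_single_one_mul_apply, ih,
        pow_succ, pow_mul, sq]
  exact ⟨2 ^ k, by rw [← hf, hk, zero_apply]⟩

theorem trace_mul_mem_of_forall_mem {I : Ideal R} (M : Matrix n n R) {W : Matrix n n R}
    (hW : ∀ i j, W i j ∈ I) : (M * W).trace ∈ I :=
  I.sum_mem fun i _ => I.sum_mem fun k _ => I.mul_mem_left _ (hW k i)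

theorem mul_self_fin_two (A : Matrix (Fin 2) (Fin 2) R) : A * A = A.trace • A - A.det • 1 := by
  ext i j
  fin_cases i <;> fin_cases j <;>
    simp only [Fin.isValue, Fin.zero_eta, Fin.mk_one, mul_apply, Fin.sum_univ_two, trace_fin_two,
      det_fin_two, sub_apply, smul_apply, smul_eq_mul, one_apply_eq, one_apply_ne, ne_eq,
      zero_ne_one, one_ne_zero, not_false_eq_true] <;> ring

theorem IsIdempotentElem.eq_zero_or_eq_one_or_trace_eq_one [IsLocalRing R]
    {E : Matrix (Fin 2) (Fin 2) R} (hE : IsIdempotentElem E) : E = 0 ∨ E = 1 ∨ E.trace = 1 := by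
  have hdet : IsIdempotentElem E.det := by rw [IsIdempotentElem, ← det_mul, hE.eq]
  rcases hdet.eq_zero_or_eq_one_of_isLocalRing with hdet | hdet
  · have hE' : E.trace • E = E := by simpa [hdet, hE.eq] using (mul_self_fin_two E).symm
    have htr : IsIdempotentElem E.trace := by
      rw [IsIdempotentElem]; simpa [trace_smul] using congrArg trace hE'
    rcases htr.eq_zero_or_eq_one_of_isLocalRing with htr | htr
    · exact Or.inl (by rw [← hE', htr, zero_smul])
    · exact Or.inr (Or.inr htr)
  · have hu : IsUnit E := (isUnit_iff_isUnit_det E).2 (hdet ▸ isUnit_one)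
    exact Or.inr (Or.inl ((IsIdempotentElem.iff_eq_one_of_isUnit hu).1 hE))

theorem mul_mul_eq_trace_smul {E : Matrix (Fin 2) (Fin 2) R} (hE : IsIdempotentElem E)
    (htr : E.trace = 1) (X : Matrix (Fin 2) (Fin 2) R) : E * X * E = (E * X).trace • E := by
  have h := congrFun₂ hE
  ext i j
  fin_cases i <;> fin_cases j <;>
    simp only [Fin.isValue, Fin.zero_eta, Fin.mk_one, mul_apply, Fin.sum_univ_two, trace_fin_two,
      smul_apply, smul_eq_mul] at h htr ⊢ <;> grind

theorem mul_eq_trace_smul_of_commute {E W : Matrix (Fin 2) (Fin 2) R}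
    (hE : IsIdempotentElem E) (htr : E.trace = 1) (hEW : Commute E W) :
    E * W = (E * W).trace • E := by
  rw [← mul_mul_eq_trace_smul hE htr, Matrix.mul_assoc, ← hEW.eq, ← Matrix.mul_assoc, hE.eq]

theorem eq_smul_add_smul_one_sub_of_commute {E W : Matrix (Fin 2) (Fin 2) R}
    (hE : IsIdempotentElem E) (htr : E.trace = 1) (hEW : Commute E W) :
    W = (E * W).trace • E + ((1 - E) * W).trace • (1 - E) := by
  have htr' : (1 - E).trace = 1 := by
    rw [trace_sub, trace_one, htr, Fintype.card_fin]; norm_num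
  rw [← mul_eq_trace_smul_of_commute hE htr hEW,
    ← mul_eq_trace_smul_of_commute hE.one_sub htr' ((Commute.one_left W).sub_left hEW),
    ← add_mul, add_sub_cancel, Matrix.one_mul]

theorem trace_smul_add_smul_one_sub {E : Matrix (Fin 2) (Fin 2) R} (htr : E.trace = 1) (x y : R) :
    (x • E + y • (1 - E)).trace = x + y := by
  rw [trace_add, trace_smul, trace_smul, trace_sub, trace_one, htr, Fintype.card_fin]
  simp only [smul_eq_mul, mul_one, Nat.cast_ofNat]
  ring

theorem det_smul_add_smul_one_sub {E : Matrix (Fin 2) (Fin 2) R} (hE : IsIdempotentElem E)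
    (htr : E.trace = 1) (x y : R) : (x • E + y • (1 - E)).det = x * y := by
  have h := congrFun₂ hE 0 0
  simp only [Fin.isValue, mul_apply, Fin.sum_univ_two, trace_fin_two, det_fin_two, add_apply,
    sub_apply, smul_apply, smul_eq_mul, one_apply_eq, one_apply_ne, ne_eq, zero_ne_one, one_ne_zero,
    not_false_eq_true] at h htr ⊢
  grind

end Matrix

open Matrix

/-- **Theorem 5.1.** Let `R` be a commutative local ring and `A ∈ M₂(R)`
(here `P(R)` is the nilradical of `R`). If `A` is strongly P-clean, then
`A ∈ M₂(P(R))`, or `I₂ - A ∈ M₂(P(R))`, or `tr(A) ∈ 1 + P(R)` and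
`tr(A)² - 4·det(A) = u²` for some `u ∈ 1 + P(R)`. -/
theorem stronglyPClean_matrix_discriminant (R : Type*) [CommRing R]
    [IsLocalRing R] (A : Matrix (Fin 2) (Fin 2) R)
    (hA : IsStronglyPClean A) :
    (∀ i j, A i j ∈ nilradical R) ∨ (∀ i j, (1 - A) i j ∈ nilradical R) ∨
      (A.trace - 1 ∈ nilradical R ∧
        ∃ u : R, u - 1 ∈ nilradical R ∧
          A.trace * A.trace - 4 * A.det = u * u) := by
  obtain ⟨E, W, hE, hW, rfl, hEW⟩ := hA
  have hWn (i j : Fin 2) : W i j ∈ nilradical R :=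
    mem_nilradical.2 (IsStronglyNilpotent.isNilpotent_matrix_apply hW i j)
  rcases hE.eq_zero_or_eq_one_or_trace_eq_one with rfl | rfl | htr
  · exact Or.inl (by simpa using hWn)
  · exact Or.inr (Or.inl fun i j => by simpa using neg_mem (hWn i j))
  set a := (E * W).trace
  set b := ((1 - E) * W).trace
  have ha : a ∈ nilradical R := trace_mul_mem_of_forall_mem E hWn
  have hb : b ∈ nilradical R := trace_mul_mem_of_forall_mem (1 - E) hWn
  have hA : E + W = (1 + a) • E + b • (1 - E) := by
    rw [eq_smul_add_smul_one_sub_of_commute hE htr hEW]; module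
  rw [hA, trace_smul_add_smul_one_sub htr, det_smul_add_smul_one_sub hE htr]
  refine Or.inr (Or.inr ⟨by convert add_mem ha hb using 1; ring, 1 + a - b, ?_, by ring⟩)
  convert sub_mem ha hb using 1; ring
end

section
/- Let R be a commutative local ring and A ∈ M₂(R). Then A is strongly P-clean if and only if (1) A ∈ M₂(P(R)), or (2) I₂ − A ∈ M₂(P(R)), or (3) A is strongly π-regular in M₂(R) and A is similar to a matrix [[0, λ], [1, μ]] with λ ∈ P(R) and μ ∈ 1 + P(R). -/
/-- An element `a` of a ring is strongly π-regular if `aⁿ = aⁿ⁺¹ b` for some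
positive integer `n` and some `b` commuting with `a`. -/
def IsStronglyPiRegular {S : Type*} [Ring S] (a : S) : Prop :=
  ∃ n : ℕ, 0 < n ∧ ∃ b : S, a ^ n = a ^ (n + 1) * b ∧ a * b = b * a

section Ring

variable {S : Type*} [Ring S]

theorem IsIdempotentElem.of_units_conj {M : Type*} [Monoid M] (u : Mˣ) {a : M}
    (h : IsIdempotentElem ((u⁻¹).val * a * u.val)) : IsIdempotentElem a := by
  simpa [IsIdempotentElem, mul_assoc] using congrArg (fun x => u.val * x * (u⁻¹).val) h

theorem IsStronglyNilpotent.isNilpotent_mul_right {a : S} (ha : IsStronglyNilpotent a) (r : S) :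
    IsNilpotent (a * r) := by
  let f : ℕ → S := fun k => Nat.rec a (fun _ x => x * r * x) k
  have hf : ∀ k, f k * r = (a * r) ^ 2 ^ k := by
    intro k
    induction k with
    | zero => simp [f]
    | succ k ih =>
      show f k * r * f k * r = _
      rw [mul_assoc (f k * r), ih, ← pow_add, ← two_mul, pow_succ' 2]
  obtain ⟨n, hn⟩ := ha f rfl fun _ => ⟨r, rfl⟩
  exact ⟨2 ^ n, by rw [← hf, hn, zero_mul]⟩

theorem IsStronglyNilpotent.isNilpotent_s19 {a : S} (ha : IsStronglyNilpotent a) : IsNilpotent a := by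
  simpa using ha.isNilpotent_mul_right 1

theorem IsIdempotentElem.isStronglyPiRegular_add {e w : S} (he : IsIdempotentElem e)
    (hw : IsNilpotent w) (hew : Commute e w) : IsStronglyPiRegular (e + w) := by
  obtain ⟨u, hu⟩ := hw.isUnit_one_add
  obtain ⟨n, hn⟩ := hw
  have hae : Commute (e + w) e := (Commute.refl e).add_left hew.symm
  have hau : Commute (e + w) u :=
    hu ▸ (Commute.one_right _).add_right (hew.add_left (Commute.refl w))
  have hae_eq : (e + w) * e = e * u := by
    rw [hu, add_mul, he.eq, ← hew.eq, mul_add, mul_one]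
  -- `e + w` is the unit `e * u` on the corner of `e` and nilpotent on that of `1 - e`.
  have hcorner : (e + w) ^ (n + 1) * (1 - e) = 0 := by
    have hcomp : (e + w) * (1 - e) = (1 - e) * w := by
      rw [mul_sub, hae_eq, hu, mul_one, sub_mul, one_mul, mul_add, mul_one]; abel
    rw [← he.one_sub.pow_succ_eq n, ← ((Commute.one_right _).sub_right hae).mul_pow, hcomp,
      ((Commute.one_left w).sub_left hew).mul_pow, pow_succ w, hn, zero_mul, mul_zero]
  refine ⟨n + 1, n.succ_pos, e * ↑u⁻¹, ?_, hae.mul_right hau.units_inv_right⟩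
  calc (e + w) ^ (n + 1) = (e + w) ^ (n + 1) * e := by
        rw [← sub_eq_zero, ← mul_one_sub, hcorner]
    _ = (e + w) ^ (n + 1) * ((e + w) * e) * ↑u⁻¹ := by
        rw [hae_eq, mul_assoc, mul_assoc, Units.mul_inv, mul_one]
    _ = (e + w) ^ (n + 1 + 1) * (e * ↑u⁻¹) := by rw [pow_succ _ (n + 1)]; noncomm_ring

variable {T : Type*} [Ring T]

theorem exists_isIdempotentElem_commute_map_eq (f : S →+* T) {x : S}
    (hx : IsNilpotent (x - x ^ 2)) (hfx : IsIdempotentElem (f x)) :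
    ∃ e, IsIdempotentElem e ∧ Commute e x ∧ f e = f x := by
  obtain ⟨n, hn⟩ := hx
  have hn' : (x - x ^ 2) ^ (n + 1) = 0 := by rw [pow_succ, hn, zero_mul]
  refine ⟨1 - (1 - x ^ (n + 1)) ^ (n + 1),
    isIdempotentElem_one_sub_one_sub_pow_pow _ _ hn', ?_, ?_⟩
  · exact (Commute.one_left x).sub_left
      (((Commute.one_left x).sub_left ((Commute.refl x).pow_left _)).pow_left _)
  · simp only [map_sub, map_one, map_pow, hfx.pow_succ_eq, hfx.one_sub.pow_succ_eq,
      sub_sub_cancel]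

theorem isStronglyPClean_of_isIdempotentElem_map (f : S →+* T)
    (hf : ∀ y, f y = 0 → IsStronglyNilpotent y) {x : S} (hx : IsIdempotentElem (f x)) :
    IsStronglyPClean x := by
  have hsq : IsNilpotent (x - x ^ 2) :=
    (hf _ (by rw [map_sub, map_pow, sq, hx.eq, sub_self])).isNilpotent_s19
  obtain ⟨e, he, hex, hfe⟩ := exists_isIdempotentElem_commute_map_eq f hsq hx
  refine ⟨e, x - e, he, hf _ (by rw [map_sub, hfe, sub_self]), (add_sub_cancel e x).symm, ?_⟩
  exact (hex.sub_right (Commute.refl e)).eq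

end Ring

namespace Matrix

variable {R : Type*} [CommRing R] {n : Type*} [Fintype n] [DecidableEq n]

theorem isNilpotent_apply_of_isNilpotent_mul_single {M : Matrix n n R} (i j : n)
    (h : IsNilpotent (M * single j i 1)) : IsNilpotent (M i j) := by
  obtain ⟨k, hk⟩ := h
  have hsq : (M * single j i 1) * (M * single j i 1) = M i j • (M * single j i 1) := by
    rw [mul_assoc, ← mul_assoc (single j i 1), single_mul_mul_single, one_mul, mul_one,
      ← Matrix.mul_smul, smul_single, smul_eq_mul, mul_one]
  have hpow : ∀ k, (M * single j i 1) ^ (k + 1) = M i j ^ k • (M * single j i 1) := by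
    intro k
    induction k with
    | zero => simp
    | succ k ih => rw [pow_succ, ih, smul_mul_assoc, hsq, smul_smul, pow_succ]
  refine ⟨k + 1, ?_⟩
  have := congr_fun₂ (hpow k) i i
  rw [pow_succ, hk, zero_mul] at this
  simpa [pow_succ] using this.symm

theorem mul_mem_matrix_mul {I K : Ideal R} {X Y : Matrix n n R} (hX : X ∈ I.matrix n)
    (hY : Y ∈ K.matrix n) : X * Y ∈ (I * K).matrix n :=
  fun i j => sum_mem fun l _ => Ideal.mul_mem_mul (hX i l) (hY l j)

theorem isStronglyNilpotent_of_mem_matrix {I : Ideal R} (hI : IsNilpotent I) {M : Matrix n n R}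
    (hM : M ∈ I.matrix n) : IsStronglyNilpotent M := by
  intro f hf0 hstep
  have hf : ∀ k, f k ∈ (I ^ (k + 1)).matrix n := by
    intro k
    induction k with
    | zero => simpa [hf0] using hM
    | succ k ih =>
      obtain ⟨r, hr⟩ := hstep k
      have hr' : f k * r ∈ (I ^ (k + 1)).matrix n := by
        simpa using mul_mem_matrix_mul (K := ⊤) ih (fun _ _ => Submodule.mem_top)
      rw [hr]
      refine Ideal.matrix_monotone n ?_ (mul_mem_matrix_mul hr' ih)
      rw [← pow_add]
      exact Ideal.pow_le_pow_right (by omega)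
  obtain ⟨m, hm⟩ := hI
  refine ⟨m, ext fun i j => ?_⟩
  simpa [pow_succ, hm] using hf m i j

theorem isStronglyNilpotent_iff_mem_matrix_nilradical {M : Matrix n n R} :
    IsStronglyNilpotent M ↔ M ∈ (nilradical R).matrix n := by
  refine ⟨fun h i j => isNilpotent_apply_of_isNilpotent_mul_single i j
    (h.isNilpotent_mul_right _), fun h => ?_⟩
  let I : Ideal R := Ideal.span (Set.range fun p : n × n => M p.1 p.2)
  have hI : IsNilpotent I := by
    refine (Ideal.FG.isNilpotent_iff_le_nilradical (Submodule.fg_span (Set.finite_range _))).mpr ?_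
    exact Ideal.span_le.mpr (Set.range_subset_iff.mpr fun p => h p.1 p.2)
  exact isStronglyNilpotent_of_mem_matrix hI fun i j => Ideal.subset_span ⟨(i, j), rfl⟩

theorem mapMatrix_mk_eq_zero_iff {I : Ideal R} {M : Matrix n n R} :
    (Ideal.Quotient.mk I).mapMatrix M = 0 ↔ M ∈ I.matrix n := by
  simp [← Matrix.ext_iff, Ideal.Quotient.eq_zero_iff_mem]

theorem det_sub_det_mem {I : Ideal R} {M N : Matrix n n R} (h : M - N ∈ I.matrix n) :
    M.det - N.det ∈ I := by
  rw [← mapMatrix_mk_eq_zero_iff, map_sub, sub_eq_zero] at h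
  rw [← Ideal.Quotient.eq, RingHom.map_det, RingHom.map_det, h]

theorem isStronglyPClean_of_isIdempotentElem_mapMatrix {M : Matrix n n R}
    (h : IsIdempotentElem ((Ideal.Quotient.mk (nilradical R)).mapMatrix M)) :
    IsStronglyPClean M :=
  isStronglyPClean_of_isIdempotentElem_map _
    (fun _ hy => isStronglyNilpotent_iff_mem_matrix_nilradical.mpr
      (mapMatrix_mk_eq_zero_iff.mp hy)) h

theorem _root_.IsIdempotentElem.det_eq_zero_of_ne_one [IsLocalRing R] {E : Matrix n n R}
    (hE : IsIdempotentElem E) (h : E ≠ 1) : E.det = 0 := by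
  have hdet : IsIdempotentElem E.det := by rw [IsIdempotentElem, ← det_mul, hE.eq]
  rcases IsLocalRing.isUnit_or_isUnit_one_sub_self E.det with hu | hu
  · exact absurd ((IsIdempotentElem.iff_eq_one_of_isUnit
      ((isUnit_iff_isUnit_det E).mpr hu)).mp hE) h
  · simpa using (IsIdempotentElem.iff_eq_one_of_isUnit hu).mp hdet.one_sub

theorem _root_.IsIdempotentElem.trace_eq_one [IsLocalRing R] {E : Matrix (Fin 2) (Fin 2) R}
    (hE : IsIdempotentElem E) (h0 : E ≠ 0) (h1 : E ≠ 1) : E.trace = 1 := by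
  have hdet := hE.det_eq_zero_of_ne_one h1
  have hdet' := hE.one_sub.det_eq_zero_of_ne_one (by simpa [sub_eq_self] using h0)
  rw [det_fin_two] at hdet hdet'
  simp only [sub_apply, one_apply_eq, one_apply_ne (show (0 : Fin 2) ≠ 1 by decide),
    one_apply_ne (show (1 : Fin 2) ≠ 0 by decide)] at hdet'
  rw [trace_fin_two]
  linear_combination hdet - hdet'

theorem exists_conj_eq_companion_of_isUnit {A : Matrix (Fin 2) (Fin 2) R} (v : Fin 2 → R)
    (hv : IsUnit (v 0 * (A *ᵥ v) 1 - (A *ᵥ v) 0 * v 1)) :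
    ∃ U : (Matrix (Fin 2) (Fin 2) R)ˣ, (U⁻¹).val * A * U.val = !![0, -A.det; 1, A.trace] := by
  let P : Matrix (Fin 2) (Fin 2) R := !![v 0, (A *ᵥ v) 0; v 1, (A *ᵥ v) 1]
  have hP : IsUnit P := by rwa [isUnit_iff_isUnit_det, det_fin_two_of]
  -- Cayley–Hamilton: `A (A v) = tr A • A v - det A • v`.
  have hAP : A * P = P * !![0, -A.det; 1, A.trace] := by
    ext i j
    fin_cases i <;> fin_cases j <;>
      simp [P, mul_apply, mulVec, dotProduct, Fin.sum_univ_two, det_fin_two, trace_fin_two] <;>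
      ring
  refine ⟨hP.unit, ?_⟩
  rw [mul_assoc, IsUnit.unit_spec, hAP, ← mul_assoc, hP.val_inv_mul, one_mul]

theorem exists_conj_eq_companion [IsLocalRing R] {A : Matrix (Fin 2) (Fin 2) R}
    (hdet : A.det ∈ IsLocalRing.maximalIdeal R) (htr : IsUnit A.trace) :
    ∃ U : (Matrix (Fin 2) (Fin 2) R)ˣ, (U⁻¹).val * A * U.val = !![0, -A.det; 1, A.trace] := by
  -- `A ≡ a • 1` modulo the maximal ideal would give `a² ≡ det A ≡ 0`, hence `tr A ≡ 2 * a ≡ 0`.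
  have hcyc : IsUnit (A 1 0) ∨ IsUnit (A 0 1) ∨ IsUnit (A 1 0 + A 1 1 - A 0 0 - A 0 1) := by
    by_contra! h
    obtain ⟨h10, h01, hs⟩ := h
    simp only [← IsLocalRing.residue_ne_zero_iff_isUnit, not_not, map_sub, map_add] at h10 h01 hs
    rw [← IsLocalRing.residue_eq_zero_iff, det_fin_two] at hdet
    rw [← IsLocalRing.residue_ne_zero_iff_isUnit, trace_fin_two, map_add] at htr
    apply htr
    grind
  rcases hcyc with h | h | h
  · exact exists_conj_eq_companion_of_isUnit ![1, 0] (by simpa [mulVec, dotProduct] using h)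
  · exact exists_conj_eq_companion_of_isUnit ![0, 1] (by simpa [mulVec, dotProduct] using h)
  · refine exists_conj_eq_companion_of_isUnit ![1, 1] ?_
    convert h using 1
    simp [mulVec, dotProduct]
    ring

theorem exists_conj_eq_companion_of_mem_nilradical [IsLocalRing R]
    {A : Matrix (Fin 2) (Fin 2) R} (hdet : A.det ∈ nilradical R)
    (htr : A.trace - 1 ∈ nilradical R) :
    ∃ (lam mu : R) (U : (Matrix (Fin 2) (Fin 2) R)ˣ),
      lam ∈ nilradical R ∧ (∃ w ∈ nilradical R, mu = 1 + w) ∧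
        (U⁻¹).val * A * U.val = !![0, lam; 1, mu] := by
  obtain ⟨U, hU⟩ := exists_conj_eq_companion (nilradical_le_prime _ hdet)
    (by simpa using (mem_nilradical.mp htr).isUnit_one_add)
  exact ⟨_, _, U, neg_mem hdet, ⟨_, htr, (add_sub_cancel _ _).symm⟩, hU⟩

theorem isStronglyPClean_of_conj_eq_companion {A : Matrix (Fin 2) (Fin 2) R} {lam w : R}
    (hlam : lam ∈ nilradical R) (hw : w ∈ nilradical R) (U : (Matrix (Fin 2) (Fin 2) R)ˣ)
    (hU : (U⁻¹).val * A * U.val = !![0, lam; 1, 1 + w]) : IsStronglyPClean A := by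
  apply isStronglyPClean_of_isIdempotentElem_mapMatrix
  apply IsIdempotentElem.of_units_conj
    (Units.map (Ideal.Quotient.mk (nilradical R)).mapMatrix.toMonoidHom U)
  rw [Units.coe_map, Units.coe_map_inv, RingHom.toMonoidHom_eq_coe, MonoidHom.coe_coe,
    ← map_mul, ← map_mul, hU]
  rw [← Ideal.Quotient.eq_zero_iff_mem] at hlam hw
  ext i j
  fin_cases i <;> fin_cases j <;> simp [mul_apply, hlam, hw]

end Matrix

/-- **Theorem 5.4.** Let `R` be a commutative local ring and `A ∈ M₂(R)`
(here `P(R)` is the nilradical of `R`). Then `A` is strongly P-clean iff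
(1) `A ∈ M₂(P(R))`, or (2) `I₂ - A ∈ M₂(P(R))`, or (3) `A` is strongly
π-regular in `M₂(R)` and `A` is similar to a matrix `[[0, λ], [1, μ]]` with
`λ ∈ P(R)` and `μ ∈ 1 + P(R)`. -/
theorem isStronglyPClean_matrix_iff_piRegular (R : Type*) [CommRing R]
    [IsLocalRing R] (A : Matrix (Fin 2) (Fin 2) R) :
    IsStronglyPClean A ↔
      ((∀ i j, A i j ∈ nilradical R) ∨
        (∀ i j, (1 - A) i j ∈ nilradical R) ∨
        (IsStronglyPiRegular A ∧
          ∃ (lam mu : R) (U : (Matrix (Fin 2) (Fin 2) R)ˣ),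
            lam ∈ nilradical R ∧ (∃ w ∈ nilradical R, mu = 1 + w) ∧
              (U⁻¹).val * A * U.val = !![0, lam; 1, mu])) := by
  constructor
  · rintro ⟨E, W, hE, hW, rfl, hEW⟩
    have hWn : W ∈ (nilradical R).matrix (Fin 2) :=
      Matrix.isStronglyNilpotent_iff_mem_matrix_nilradical.mp hW
    by_cases hE0 : E = 0
    · exact Or.inl (by simpa [hE0] using hWn)
    by_cases hE1 : E = 1
    · exact Or.inr (Or.inl (by simpa [hE1] using neg_mem hWn))
    have hdet : (E + W).det ∈ nilradical R := by
      simpa [hE.det_eq_zero_of_ne_one hE1] using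
        Matrix.det_sub_det_mem (N := E) (by simpa using hWn)
    have htr : (E + W).trace - 1 ∈ nilradical R := by
      rw [Matrix.trace_add, hE.trace_eq_one hE0 hE1, add_sub_cancel_left]
      exact sum_mem fun i _ => hWn i i
    exact Or.inr (Or.inr ⟨hE.isStronglyPiRegular_add hW.isNilpotent_s19 hEW,
      Matrix.exists_conj_eq_companion_of_mem_nilradical hdet htr⟩)
  · rintro (h | h | ⟨-, lam, mu, U, hlam, ⟨w, hw, rfl⟩, hU⟩)
    · apply Matrix.isStronglyPClean_of_isIdempotentElem_mapMatrix
      rw [Matrix.mapMatrix_mk_eq_zero_iff.mpr h]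
      exact .zero
    · apply Matrix.isStronglyPClean_of_isIdempotentElem_mapMatrix
      have h1 : (Ideal.Quotient.mk (nilradical R)).mapMatrix A = 1 := by
        rw [eq_comm, ← sub_eq_zero, ← map_one (Ideal.Quotient.mk _).mapMatrix, ← map_sub]
        exact Matrix.mapMatrix_mk_eq_zero_iff.mpr h
      rw [h1]
      exact .one
    · exact Matrix.isStronglyPClean_of_conj_eq_companion hlam hw U hU
end
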